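/- arXiv:2410.23243 — 11 statements merged into one kernel-verified Lean document; each statement's English description precedes it below -/
import Mathlib

section
/- For any η > 0, the function h_η(x) = x / (1 - exp(-η x)) satisfies: the successive differences h_η(x+1) - h_η(x) for positive integers x are strictly increasing in x, and each such difference is strictly greater than 1/2. -/
/-!
Write `t = η x` and `e = exp (-t)`. Then `h_η' = (1 - e - t e) / (1 - e)²` and
`h_η'' = η e (t (1 + e) - 2 (1 - e)) / (1 - e)³`. The inequality `h_η' > 1/2` is `sinh t > t`, and
`h_η'' > 0` is `tanh (t / 2) < t / 2`. Hence `h_η` is strictly convex on `(0, ∞)`, so its unit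
increments strictly increase, and by the mean value theorem each of them exceeds `1/2`.
-/

open Real

noncomputable def hEta (η x : ℝ) : ℝ := x / (1 - Real.exp (-η * x))

open Set

theorem StrictConvexOn.sub_lt_sub_of_lt {𝕜 : Type*} [Field 𝕜] [LinearOrder 𝕜]
    [IsStrictOrderedRing 𝕜] {s : Set 𝕜} {f : 𝕜 → 𝕜} (hf : StrictConvexOn 𝕜 s f) {a b d : 𝕜}
    (ha : a ∈ s) (hbd : b + d ∈ s) (hd : 0 < d) (hab : a < b) :
    f (a + d) - f a < f (b + d) - f b := by
  have hab_d : Icc a (b + d) ⊆ s := hf.1.ordConnected.out ha hbd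
  have had : a + d ∈ s := hab_d ⟨by linarith, by linarith⟩
  have hb : b ∈ s := hab_d ⟨hab.le, by linarith⟩
  have key : (f (a + d) - f a) / d < (f (b + d) - f b) / d :=
    calc (f (a + d) - f a) / d
        < (f (b + d) - f a) / (b + d - a) := by
          simpa using hf.secant_strict_mono ha had hbd (by linarith) (by linarith) (by linarith)
      _ = (f a - f (b + d)) / (a - (b + d)) := by rw [← neg_div_neg_eq, neg_sub, neg_sub]
      _ < (f b - f (b + d)) / (b - (b + d)) :=
          hf.secant_strict_mono hbd ha hb (by linarith) (by linarith) hab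
      _ = (f (b + d) - f b) / d := by rw [← neg_div_neg_eq, neg_sub]; ring_nf
  exact (div_lt_div_iff_of_pos_right hd).1 key

theorem two_mul_one_sub_exp_neg_lt {t : ℝ} (ht : 0 < t) :
    2 * (1 - exp (-t)) < t * (1 + exp (-t)) := by
  let φ : ℝ → ℝ := fun u => u * (1 + exp (-u)) - 2 * (1 - exp (-u))
  have hφ : ∀ u, HasDerivAt φ (exp (-u) * (exp u - 1 - u)) u := by
    intro u
    have he : HasDerivAt (fun u => exp (-u)) (-exp (-u)) u := by
      simpa using (hasDerivAt_neg u).exp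
    refine (((hasDerivAt_id' u).mul (he.const_add 1)).sub
      ((he.const_sub 1).const_mul 2)).congr_deriv ?_
    rw [exp_neg]
    field_simp
    ring
  have hmono : StrictMonoOn φ (Ici 0) := by
    refine strictMonoOn_of_deriv_pos (convex_Ici 0)
      (fun u _ => (hφ u).continuousAt.continuousWithinAt) fun u hu => ?_
    rw [interior_Ici] at hu
    rw [(hφ u).deriv]
    exact mul_pos (exp_pos _) (by linarith [add_one_lt_exp (ne_of_gt hu)])
  simpa [φ] using hmono self_mem_Ici ht.le ht

theorem exp_neg_sq_add_two_mul_lt_one {t : ℝ} (ht : 0 < t) :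
    exp (-t) ^ 2 + 2 * t * exp (-t) < 1 := by
  have hsinh : t < sinh t := self_lt_sinh_iff.2 ht
  rw [sinh_eq] at hsinh
  have hinv : exp t * exp (-t) = 1 := by rw [← exp_add, add_neg_cancel, exp_zero]
  nlinarith [exp_pos (-t)]

section hEta

variable {η x : ℝ}

noncomputable def hEtaDeriv (η x : ℝ) : ℝ :=
  (1 - exp (-η * x) - η * x * exp (-η * x)) / (1 - exp (-η * x)) ^ 2

theorem one_sub_exp_neg_mul_pos (hη : 0 < η) (hx : 0 < x) : 0 < 1 - exp (-η * x) := by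
  rw [sub_pos, exp_lt_one_iff, neg_mul, neg_lt_zero]
  exact mul_pos hη hx

theorem hasDerivAt_exp_neg_mul (η x : ℝ) :
    HasDerivAt (fun y => exp (-η * y)) (-η * exp (-η * x)) x := by
  have hlin : HasDerivAt (fun y => -η * y) (-η) x := by
    simpa using (hasDerivAt_id x).const_mul (-η)
  exact hlin.exp.congr_deriv (mul_comm _ _)

theorem hasDerivAt_hEta (hη : 0 < η) (hx : 0 < x) : HasDerivAt (hEta η) (hEtaDeriv η x) x := by
  refine ((hasDerivAt_id x).div ((hasDerivAt_exp_neg_mul η x).const_sub 1)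
    (one_sub_exp_neg_mul_pos hη hx).ne').congr_deriv ?_
  simp only [hEtaDeriv, id]
  ring

theorem deriv_hEta (hη : 0 < η) (hx : 0 < x) : deriv (hEta η) x = hEtaDeriv η x :=
  (hasDerivAt_hEta hη hx).deriv

theorem continuousOn_hEta (hη : 0 < η) : ContinuousOn (hEta η) (Ioi 0) :=
  fun _ hx => (hasDerivAt_hEta hη hx).continuousAt.continuousWithinAt

theorem one_half_lt_hEtaDeriv (hη : 0 < η) (hx : 0 < x) : 1 / 2 < hEtaDeriv η x := by
  have hsinh := exp_neg_sq_add_two_mul_lt_one (mul_pos hη hx)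
  rw [← neg_mul] at hsinh
  rw [hEtaDeriv, lt_div_iff₀ (pow_pos (one_sub_exp_neg_mul_pos hη hx) 2)]
  nlinarith

theorem hasDerivAt_hEtaDeriv (hη : 0 < η) (hx : 0 < x) :
    HasDerivAt (hEtaDeriv η)
      (η * exp (-η * x) * (η * x * (1 + exp (-η * x)) - 2 * (1 - exp (-η * x))) /
        (1 - exp (-η * x)) ^ 3) x := by
  have hexp := hasDerivAt_exp_neg_mul η x
  have hden := hexp.const_sub 1
  have hnum := hden.sub (((hasDerivAt_id' x).const_mul η).mul hexp)
  refine (hnum.div (hden.pow 2) (pow_ne_zero 2 (one_sub_exp_neg_mul_pos hη hx).ne')).congr_deriv ?_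
  have hden_ne := (one_sub_exp_neg_mul_pos hη hx).ne'
  simp only [Pi.pow_apply, Pi.sub_apply, Pi.mul_apply]
  generalize exp (-η * x) = e at hden_ne ⊢
  field_simp
  ring

theorem hEtaDeriv_strictMonoOn (hη : 0 < η) : StrictMonoOn (hEtaDeriv η) (Ioi 0) := by
  refine strictMonoOn_of_deriv_pos (convex_Ioi 0)
    (fun _ hx => (hasDerivAt_hEtaDeriv hη hx).continuousAt.continuousWithinAt) fun x hx => ?_
  rw [interior_Ioi] at hx
  have hden := one_sub_exp_neg_mul_pos hη hx
  have htanh := two_mul_one_sub_exp_neg_lt (mul_pos hη hx)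
  rw [← neg_mul] at htanh
  rw [(hasDerivAt_hEtaDeriv hη hx).deriv]
  exact div_pos (mul_pos (mul_pos hη (exp_pos _)) (sub_pos.2 htanh)) (pow_pos hden 3)

theorem hEta_strictConvexOn (hη : 0 < η) : StrictConvexOn ℝ (Ioi 0) (hEta η) := by
  refine StrictMonoOn.strictConvexOn_of_deriv (convex_Ioi 0) (continuousOn_hEta hη) ?_
  rw [interior_Ioi]
  exact (hEtaDeriv_strictMonoOn hη).congr fun x hx => (deriv_hEta hη hx).symm

theorem half_mul_sub_lt_hEta_sub (hη : 0 < η) {y : ℝ} (hx : 0 < x) (hxy : x < y) :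
    1 / 2 * (y - x) < hEta η y - hEta η x := by
  refine (convex_Ioi 0).mul_sub_lt_image_sub_of_lt_deriv (continuousOn_hEta hη)
    (fun z hz => (hasDerivAt_hEta hη (interior_subset hz)).differentiableAt.differentiableWithinAt)
    (fun z hz => ?_) x hx y (hx.trans hxy) hxy
  rw [interior_Ioi] at hz
  rw [deriv_hEta hη hz]
  exact one_half_lt_hEtaDeriv hη hz

end hEta

/-- For any `η > 0`, the successive differences `h_η(x+1) - h_η(x)` over positive
integers `x` are strictly increasing, and each difference is greater than `1/2`. -/
theorem stmt_1 (η : ℝ) (hη : 0 < η) :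
    (∀ x y : ℕ, 0 < x → x < y →
      hEta η (x + 1) - hEta η x < hEta η (y + 1) - hEta η y) ∧
    (∀ x : ℕ, 0 < x → hEta η (x + 1) - hEta η x > 1 / 2) := by
  refine ⟨fun x y hx hxy => ?_, fun x hx => ?_⟩
  · have hy : (0 : ℝ) < y + 1 := by positivity
    exact (hEta_strictConvexOn hη).sub_lt_sub_of_lt (mem_Ioi.2 (Nat.cast_pos.2 hx)) hy one_pos
      (Nat.cast_lt.2 hxy)
  · simpa only [add_sub_cancel_left, mul_one] using
      half_mul_sub_lt_hEta_sub hη (Nat.cast_pos.2 hx) (lt_add_one (x : ℝ))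
end

section
/- For all x > 0, we have (x - 2) + (x + 2)·e^{-x} > 0. -/
/-- For all `x > 0`, `(x - 2) + (x + 2) e^{-x} > 0`. -/
theorem stmt_3 (x : ℝ) (hx : 0 < x) :
    (x - 2) + (x + 2) * Real.exp (-x) > 0 := by
  have key : StrictMonoOn (fun y : ℝ => (y - 2) + (y + 2) * Real.exp (-y)) (Set.Ici 0) := by
    apply strictMonoOn_of_deriv_pos (convex_Ici 0)
    · fun_prop
    · intro y hy
      rw [interior_Ici] at hy
      have hd : HasDerivAt (fun y : ℝ => (y - 2) + (y + 2) * Real.exp (-y))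
          (1 + (1 * Real.exp (-y) + (y + 2) * (Real.exp (-y) * (-1)))) y := by
        exact ((hasDerivAt_id y).sub_const 2).add
          (((hasDerivAt_id y).add_const 2).mul ((hasDerivAt_neg y).exp))
      rw [hd.deriv]
      have h1 : (y + 1) * Real.exp (-y) < 1 := by
        have h := Real.add_one_lt_exp (ne_of_gt (Set.mem_Ioi.mp hy) : y ≠ 0)
        rw [Real.exp_neg, mul_inv_lt_iff₀ (Real.exp_pos y)]
        linarith
      nlinarith [Real.exp_pos (-y)]
  have h0 : (0 : ℝ) ∈ Set.Ici (0 : ℝ) := Set.mem_Ici.mpr le_rfl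
  have hx' : x ∈ Set.Ici (0 : ℝ) := le_of_lt hx
  have := key h0 hx' hx
  simpa using this
end

section
/- Let (S_i, S_j, S_k) be a {-1,1}³-valued random vector such that S_j uniformly dominates S_k for S_i. Then for each s ∈ {-1,1}, the report ŝ = s is the unique maximizer of E[ŝ·S_j - ŝ·S_k | S_i = s] over ŝ ∈ {-1,1}, and moreover E[S_i·S_j - S_i·S_k] > 0. -/
open Finset

/-- Sign value of a boolean signal: `true ↦ 1`, `false ↦ -1`. -/
def sgn (b : Bool) : ℝ := if b then 1 else -1

/-- Under uniform dominance, truthful reporting is the unique maximizer of the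
expected bonus-penalty payment conditioned on each own signal, and the expected
payment under truth-telling is strictly positive.  `p s j k` is the joint pmf of
`(S_i, S_j, S_k)` where `true` encodes `1` and `false` encodes `-1`. -/
theorem stmt_5 (p : Bool → Bool → Bool → ℝ)
    (hpos : ∀ s j k, 0 ≤ p s j k)
    (hsum : ∑ s, ∑ j, ∑ k, p s j k = 1)
    (hmarg : ∀ s, 0 < ∑ j, ∑ k, p s j k)
    -- uniform dominance: Pr[S_j = 1 ∣ S_i = 1] > Pr[S_k = 1 ∣ S_i = 1]
    (hud1 : (∑ k, p true true k) / (∑ j, ∑ k, p true j k) >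
            (∑ j, p true j true) / (∑ j, ∑ k, p true j k))
    -- and Pr[S_j = -1 ∣ S_i = -1] > Pr[S_k = -1 ∣ S_i = -1]
    (hud2 : (∑ k, p false false k) / (∑ j, ∑ k, p false j k) >
            (∑ j, p false j false) / (∑ j, ∑ k, p false j k)) :
    (∀ s : Bool,
      (∑ j, ∑ k, p s j k * (sgn s * sgn j - sgn s * sgn k)) / (∑ j, ∑ k, p s j k) >
      (∑ j, ∑ k, p s j k * (sgn (!s) * sgn j - sgn (!s) * sgn k)) / (∑ j, ∑ k, p s j k)) ∧
    (∑ s, ∑ j, ∑ k, p s j k * (sgn s * sgn j - sgn s * sgn k)) > 0 := by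

  have hm1 := hmarg true
  have hm2 := hmarg false
  have h1 : (∑ k, p true true k) > (∑ j, p true j true) :=
    (div_lt_div_iff_of_pos_right hm1).mp hud1
  have h2 : (∑ k, p false false k) > (∑ j, p false j false) :=
    (div_lt_div_iff_of_pos_right hm2).mp hud2
  simp only [Fintype.sum_bool, sgn] at *
  norm_num at *
  exact ⟨⟨(div_lt_div_iff_of_pos_right hm2).mpr (by linarith),
          (div_lt_div_iff_of_pos_right hm1).mpr (by linarith)⟩, by linarith⟩
end

section
/- Let (S_i, S_j, S_k) be a {-1,1}³-valued random vector such that S_j uniformly dominates S_k for S_i, and let σ be any strategy (random map {-1,1} → {-1,1}) applied independently to S_j and S_k to produce Ŝ_j, Ŝ_k. Then for each s_i ∈ {-1,1}, E[ŝ_i·Ŝ_j - ŝ_i·Ŝ_k | S_i = s_i] = 2δ(σ(s_i, ŝ_i) - σ(-s_i, ŝ_i)) where δ = Pr[S_j = s_i | S_i = s_i] - Pr[S_k = s_i | S_i = s_i] > 0; consequently the argmax over ŝ_i of the conditional expected payment equals the argmax over ŝ_i of σ(s_i, ŝ_i) - σ(-s_i, ŝ_i). -/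
/-
Because `Ŝ_j` and `Ŝ_k` are produced independently by the same strategy, summing out the reports
turns the payment into `ŝ_i (m(S_j) - m(S_k))`, where `m(s) = E[sgn σ(s)]` is the mean report
on signal `s`. A signal pair can only contribute through `S_j ≠ S_k`, so the conditional
expectation factors as `(Pr[S_j = s_i] - Pr[S_k = s_i]) · ŝ_i (m(s_i) - m(-s_i))`, and since each
row of `σ` sums to one, `ŝ_i (m(s_i) - m(-s_i)) = 2 (σ(s_i, ŝ_i) - σ(-s_i, ŝ_i))`. Uniform
dominance makes the first factor positive, which gives the argmax statement.
-/

open Finset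

theorem sum_sum_mul_mul_sub_mul {α : Type*} [Fintype α] (a x : ℝ) (u v w : α → ℝ)
    (hu : ∑ b, u b = 1) (hv : ∑ c, v c = 1) :
    ∑ b, ∑ c, a * u b * v c * (x * w b - x * w c) =
      a * (x * ∑ b, u b * w b - x * ∑ c, v c * w c) := by
  have h : ∀ b c, a * u b * v c * (x * w b - x * w c) =
      a * x * (u b * w b) * v c - a * x * u b * (v c * w c) := fun b c => by ring
  simp only [h, sum_sub_distrib, ← mul_sum, ← sum_mul, hu, hv]
  ring

theorem Bool.sum_sum_mul_sub (f : Bool → Bool → ℝ) (g : Bool → ℝ) (s : Bool) :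
    ∑ j, ∑ k, f j k * (g j - g k) = (∑ k, f s k - ∑ j, f j s) * (g s - g !s) := by
  cases s <;> simp only [Fintype.sum_bool, Bool.not_true, Bool.not_false] <;> ring

theorem sgn_mul_sub_sum_mul_sgn (σ : Bool → Bool → ℝ) (hσsum : ∀ s, ∑ t, σ s t = 1)
    (s s' t : Bool) :
    sgn t * (∑ b, σ s b * sgn b - ∑ b, σ s' b * sgn b) = 2 * (σ s t - σ s' t) := by
  have hs := hσsum s
  have hs' := hσsum s'
  simp only [Fintype.sum_bool] at hs hs' ⊢
  cases t <;> simp only [sgn, if_true, Bool.false_eq_true, if_false] <;> linarith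

theorem sum_bpp_payment_eq (p : Bool → Bool → ℝ) (σ : Bool → Bool → ℝ)
    (hσsum : ∀ s, ∑ t, σ s t = 1) (s t : Bool) :
    ∑ j, ∑ k, ∑ b, ∑ c, p j k * σ j b * σ k c * (sgn t * sgn b - sgn t * sgn c) =
      2 * (∑ k, p s k - ∑ j, p j s) * (σ s t - σ (!s) t) := by
  set g : Bool → ℝ := fun j => sgn t * ∑ b, σ j b * sgn b
  calc _ = ∑ j, ∑ k, p j k * (g j - g k) := by
        refine sum_congr rfl fun j _ => sum_congr rfl fun k _ => ?_
        exact sum_sum_mul_mul_sub_mul _ _ _ _ _ (hσsum j) (hσsum k)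
    _ = (∑ k, p s k - ∑ j, p j s) * (g s - g !s) := Bool.sum_sum_mul_sub p g s
    _ = _ := by
        rw [← mul_sub, sgn_mul_sub_sum_mul_sgn σ hσsum]
        ring

theorem stmt_7_general (p : Bool → Bool → Bool → ℝ)
    (hud1 : (∑ k, p true true k) / (∑ j, ∑ k, p true j k) >
            (∑ j, p true j true) / (∑ j, ∑ k, p true j k))
    (hud2 : (∑ k, p false false k) / (∑ j, ∑ k, p false j k) >
            (∑ j, p false j false) / (∑ j, ∑ k, p false j k))
    (σ : Bool → Bool → ℝ)
    (hσsum : ∀ s, ∑ t, σ s t = 1) :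
    ∀ si : Bool,
      0 < (∑ k, p si si k) / (∑ j, ∑ k, p si j k) -
          (∑ j, p si j si) / (∑ j, ∑ k, p si j k) ∧
      (∀ shat : Bool,
        (∑ j, ∑ k, ∑ b, ∑ c,
          p si j k * σ j b * σ k c * (sgn shat * sgn b - sgn shat * sgn c)) /
          (∑ j, ∑ k, p si j k) =
        2 * ((∑ k, p si si k) / (∑ j, ∑ k, p si j k) -
             (∑ j, p si j si) / (∑ j, ∑ k, p si j k)) *
          (σ si shat - σ (!si) shat)) ∧
      ((∑ j, ∑ k, ∑ b, ∑ c,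
          p si j k * σ j b * σ k c * (sgn true * sgn b - sgn true * sgn c)) /
          (∑ j, ∑ k, p si j k) >
       (∑ j, ∑ k, ∑ b, ∑ c,
          p si j k * σ j b * σ k c * (sgn false * sgn b - sgn false * sgn c)) /
          (∑ j, ∑ k, p si j k) ↔
       σ si true - σ (!si) true > σ si false - σ (!si) false) := by
  intro si
  have hδ : 0 < (∑ k, p si si k) / (∑ j, ∑ k, p si j k) -
      (∑ j, p si j si) / (∑ j, ∑ k, p si j k) := by
    cases si
    exacts [sub_pos.2 hud2, sub_pos.2 hud1]
  have hpayment : ∀ shat : Bool,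
      (∑ j, ∑ k, ∑ b, ∑ c,
        p si j k * σ j b * σ k c * (sgn shat * sgn b - sgn shat * sgn c)) /
        (∑ j, ∑ k, p si j k) =
      2 * ((∑ k, p si si k) / (∑ j, ∑ k, p si j k) -
           (∑ j, p si j si) / (∑ j, ∑ k, p si j k)) *
        (σ si shat - σ (!si) shat) := fun shat => by
    rw [sum_bpp_payment_eq (p si) σ hσsum si shat]
    ring
  refine ⟨hδ, hpayment, ?_⟩
  rw [hpayment true, hpayment false, gt_iff_lt, gt_iff_lt]
  exact mul_lt_mul_iff_right₀ (by linarith)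

/-- When agents `j` and `k` both apply a strategy `σ` (independently) to their
signals and `S_j` uniformly dominates `S_k` for `S_i`, the conditional expected
bonus-penalty payment of agent `i` reporting `ŝ_i` on signal `s_i` equals
`2 δ (σ(s_i, ŝ_i) - σ(-s_i, ŝ_i))` with
`δ = Pr[S_j = s_i ∣ S_i = s_i] - Pr[S_k = s_i ∣ S_i = s_i] > 0`; hence the best
response maximizes `σ(s_i, ·) - σ(-s_i, ·)`. -/
theorem stmt_7 (p : Bool → Bool → Bool → ℝ)
    (hpos : ∀ s j k, 0 ≤ p s j k)
    (hsum : ∑ s, ∑ j, ∑ k, p s j k = 1)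
    (hmarg : ∀ s, 0 < ∑ j, ∑ k, p s j k)
    (hud1 : (∑ k, p true true k) / (∑ j, ∑ k, p true j k) >
            (∑ j, p true j true) / (∑ j, ∑ k, p true j k))
    (hud2 : (∑ k, p false false k) / (∑ j, ∑ k, p false j k) >
            (∑ j, p false j false) / (∑ j, ∑ k, p false j k))
    (σ : Bool → Bool → ℝ)
    (hσpos : ∀ s t, 0 ≤ σ s t) (hσsum : ∀ s, ∑ t, σ s t = 1) :
    ∀ si : Bool,
      0 < (∑ k, p si si k) / (∑ j, ∑ k, p si j k) -
          (∑ j, p si j si) / (∑ j, ∑ k, p si j k) ∧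
      (∀ shat : Bool,
        (∑ j, ∑ k, ∑ b, ∑ c,
          p si j k * σ j b * σ k c * (sgn shat * sgn b - sgn shat * sgn c)) /
          (∑ j, ∑ k, p si j k) =
        2 * ((∑ k, p si si k) / (∑ j, ∑ k, p si j k) -
             (∑ j, p si j si) / (∑ j, ∑ k, p si j k)) *
          (σ si shat - σ (!si) shat)) ∧
      ((∑ j, ∑ k, ∑ b, ∑ c,
          p si j k * σ j b * σ k c * (sgn true * sgn b - sgn true * sgn c)) /
          (∑ j, ∑ k, p si j k) >
       (∑ j, ∑ k, ∑ b, ∑ c,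
          p si j k * σ j b * σ k c * (sgn false * sgn b - sgn false * sgn c)) /
          (∑ j, ∑ k, p si j k) ↔
       σ si true - σ (!si) true > σ si false - σ (!si) false) :=
  stmt_7_general p hud1 hud2 σ hσsum
end

section
/- Let (S_i, S_j, S_k) be a {-1,1}³-valued random vector with S_j uniformly dominating S_k for S_i. If a deterministic strategy σ : {-1,1} → {-1,1} applied by j and k makes truthful reporting by i no longer strictly optimal for both signal values, then σ is either constant (uninformed) — in which case all payments are zero in expectation — or σ is the sign-flip map s ↦ -s, in which case the expected payment equals that under truth-telling. -/
open Finset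

/-- Under uniform dominance, if a deterministic strategy `σ` used by agents `j`
and `k` makes truthful reporting by agent `i` no longer strictly optimal for
both signal values, then `σ` is constant (uninformed), in which case the
expected payment (with everyone using `σ`) is zero, or `σ` is the sign flip,
in which case the expected payment equals the truth-telling expected payment. -/
theorem stmt_8 (p : Bool → Bool → Bool → ℝ)
    (hpos : ∀ s j k, 0 ≤ p s j k)
    (hsum : ∑ s, ∑ j, ∑ k, p s j k = 1)
    (hmarg : ∀ s, 0 < ∑ j, ∑ k, p s j k)
    (hud1 : (∑ k, p true true k) / (∑ j, ∑ k, p true j k) >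
            (∑ j, p true j true) / (∑ j, ∑ k, p true j k))
    (hud2 : (∑ k, p false false k) / (∑ j, ∑ k, p false j k) >
            (∑ j, p false j false) / (∑ j, ∑ k, p false j k))
    (σ : Bool → Bool)
    -- truthful reporting by `i` is not strictly optimal for both signal values
    (hnotopt : ¬ (∀ si : Bool,
      (∑ j, ∑ k, p si j k * (sgn si * sgn (σ j) - sgn si * sgn (σ k))) /
        (∑ j, ∑ k, p si j k) >
      (∑ j, ∑ k, p si j k * (sgn (!si) * sgn (σ j) - sgn (!si) * sgn (σ k))) /
        (∑ j, ∑ k, p si j k))) :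
    ((∀ s t : Bool, σ s = σ t) ∧
      (∑ s, ∑ j, ∑ k,
        p s j k * (sgn (σ s) * sgn (σ j) - sgn (σ s) * sgn (σ k))) = 0) ∨
    (σ = (fun s => !s) ∧
      (∑ s, ∑ j, ∑ k,
        p s j k * (sgn (σ s) * sgn (σ j) - sgn (σ s) * sgn (σ k))) =
      (∑ s, ∑ j, ∑ k, p s j k * (sgn s * sgn j - sgn s * sgn k))) := by
  rcases ht : σ true with _ | _ <;> rcases hf : σ false with _ | _
  · -- σ constant false
    left
    constructor
    · intro s t; cases s <;> cases t <;> simp [ht, hf]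
    · have hσ : ∀ x, σ x = false := by intro x; cases x <;> simp [ht, hf]
      simp [hσ]
  · -- σ = not
    right
    have hσ : σ = fun s => !s := by funext x; cases x <;> simp [ht, hf]
    refine ⟨hσ, ?_⟩
    subst hσ
    simp only [Fintype.sum_bool]
    simp [sgn]
  · -- σ = id : contradiction
    exfalso
    apply hnotopt
    intro si
    rw [gt_iff_lt, div_lt_div_iff_of_pos_right (hmarg si)]
    have hσ : ∀ x, σ x = x := by intro x; cases x <;> simp [ht, hf]
    have hD1 := hmarg true
    have hD2 := hmarg false
    rw [gt_iff_lt, div_lt_div_iff_of_pos_right hD1] at hud1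
    rw [gt_iff_lt, div_lt_div_iff_of_pos_right hD2] at hud2
    simp only [hσ, Fintype.sum_bool] at *
    cases si <;> simp [sgn] <;> nlinarith [hud1, hud2]
  · -- σ constant true
    left
    constructor
    · intro s t; cases s <;> cases t <;> simp [ht, hf]
    · have hσ : ∀ x, σ x = true := by intro x; cases x <;> simp [ht, hf]
      simp [hσ]
end

section
/- (Uniqueness of bonus-penalty payment, necessity direction) Suppose U : {-1,1}³ → ℝ has the property that for every {-1,1}³-valued random vector (S_i, S_j, S_k) in which S_j uniformly dominates S_k for S_i, and for every s_i ∈ {-1,1}, s_i is the unique maximizer of E[U(ŝ_i, S_j, S_k) | S_i = s_i] over ŝ_i ∈ {-1,1}. Then there exist λ > 0 and μ : {-1,1}² → ℝ such that U(s_i, s_j, s_k) = λ·(s_i s_j - s_i s_k) + μ(s_j, s_k) for all s_i, s_j, s_k ∈ {-1,1}. -/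
open Finset

set_option maxHeartbeats 1000000

/-- Uniqueness of the bonus-penalty payment (necessity): if a payment `U` on
`{-1,1}³` makes truth-telling the unique best response for agent `i` under
every joint distribution in which `S_j` uniformly dominates `S_k` for `S_i`,
then `U` is a positive multiple of the bonus-penalty payment plus a function of
the last two reports. -/
theorem stmt_10 (U : Bool → Bool → Bool → ℝ)
    (htruthful : ∀ p : Bool → Bool → Bool → ℝ,
      (∀ s j k, 0 ≤ p s j k) →
      (∑ s, ∑ j, ∑ k, p s j k = 1) →
      (∀ s, 0 < ∑ j, ∑ k, p s j k) →
      ((∑ k, p true true k) / (∑ j, ∑ k, p true j k) >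
        (∑ j, p true j true) / (∑ j, ∑ k, p true j k)) →
      ((∑ k, p false false k) / (∑ j, ∑ k, p false j k) >
        (∑ j, p false j false) / (∑ j, ∑ k, p false j k)) →
      ∀ si : Bool,
        (∑ j, ∑ k, p si j k * U si j k) / (∑ j, ∑ k, p si j k) >
        (∑ j, ∑ k, p si j k * U (!si) j k) / (∑ j, ∑ k, p si j k)) :
    ∃ lam : ℝ, 0 < lam ∧ ∃ μ : Bool → Bool → ℝ,
      ∀ si sj sk : Bool,
        U si sj sk = lam * (sgn si * sgn sj - sgn si * sgn sk) + μ sj sk := by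
  -- Key lemma extracted from the truthfulness hypothesis
  have key : ∀ a b c d a' b' c' d' : ℝ,
      0 ≤ a → 0 ≤ b → 0 ≤ c → 0 ≤ d → 0 ≤ a' → 0 ≤ b' → 0 ≤ c' → 0 ≤ d' →
      a + b + c + d = 1 → a' + b' + c' + d' = 1 → c < b → b' < c' →
      (0 < a * (U true true true - U false true true)
         + b * (U true true false - U false true false)
         + c * (U true false true - U false false true)
         + d * (U true false false - U false false false)) ∧
      (a' * (U true true true - U false true true)
         + b' * (U true true false - U false true false)
         + c' * (U true false true - U false false true)
         + d' * (U true false false - U false false false) < 0) := by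
    intro a b c d a' b' c' d' ha hb hc hd ha' hb' hc' hd' hs hs' h1 h2
    set p : Bool → Bool → Bool → ℝ := fun s j k =>
      (1/2) * (if s then (if j then (if k then a else b) else (if k then c else d))
               else (if j then (if k then a' else b') else (if k then c' else d'))) with hp
    have hnn : ∀ s j k, 0 ≤ p s j k := by
      intro s j k; cases s <;> cases j <;> cases k <;> simp [hp] <;> linarith
    have hsum : ∑ s, ∑ j, ∑ k, p s j k = 1 := by
      simp [hp, Fintype.sum_bool]; linarith
    have hdt : (∑ j, ∑ k, p true j k) = 1/2 := by
      simp [hp, Fintype.sum_bool]; linarith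
    have hdf : (∑ j, ∑ k, p false j k) = 1/2 := by
      simp [hp, Fintype.sum_bool]; linarith
    have hpos : ∀ s, 0 < ∑ j, ∑ k, p s j k := by
      intro s
      cases s
      · rw [hdf]; norm_num
      · rw [hdt]; norm_num
    have hdom1 : (∑ k, p true true k) / (∑ j, ∑ k, p true j k) >
        (∑ j, p true j true) / (∑ j, ∑ k, p true j k) := by
      rw [hdt, gt_iff_lt, div_lt_div_iff₀ (by norm_num) (by norm_num)]
      simp [hp, Fintype.sum_bool]; nlinarith
    have hdom2 : (∑ k, p false false k) / (∑ j, ∑ k, p false j k) >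
        (∑ j, p false j false) / (∑ j, ∑ k, p false j k) := by
      rw [hdf, gt_iff_lt, div_lt_div_iff₀ (by norm_num) (by norm_num)]
      simp [hp, Fintype.sum_bool]; nlinarith
    have h := htruthful p hnn hsum hpos hdom1 hdom2
    have ht := h true
    have hf := h false
    rw [hdt, gt_iff_lt, div_lt_div_iff₀ (by norm_num) (by norm_num)] at ht
    rw [hdf, gt_iff_lt, div_lt_div_iff₀ (by norm_num) (by norm_num)] at hf
    simp [hp, Fintype.sum_bool] at ht hf
    constructor <;> nlinarith
  -- Abbreviations for the differences D(j,k) = U true j k - U false j k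
  set A : ℝ := U true true true - U false true true with hAdef
  set C : ℝ := U true true false - U false true false with hCdef
  set B : ℝ := U true false true - U false false true with hBdef
  set E : ℝ := U true false false - U false false false with hEdef
  -- Point masses: C > 0 and B < 0
  have hC : 0 < C := by
    have := key 0 1 0 0 0 0 1 0 (by norm_num) (by norm_num) (by norm_num)
      (by norm_num) (by norm_num) (by norm_num) (by norm_num) (by norm_num)
      (by norm_num) (by norm_num) (by norm_num) (by norm_num)
    linarith [this.1]
  have hB : B < 0 := by
    have := key 0 1 0 0 0 0 1 0 (by norm_num) (by norm_num) (by norm_num)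
      (by norm_num) (by norm_num) (by norm_num) (by norm_num) (by norm_num)
      (by norm_num) (by norm_num) (by norm_num) (by norm_num)
    linarith [this.2]
  -- A = 0
  have hA1 : A ≤ 0 := by
    by_contra h
    push_neg at h
    set ε : ℝ := A / (A - B) with hε
    have hAB : 0 < A - B := by linarith
    have hε0 : 0 < ε := div_pos (by linarith) hAB
    have hε1 : ε < 1 := by rw [hε, div_lt_one hAB]; linarith
    have := key 0 1 0 0 (1 - ε) 0 ε 0 (by norm_num) (by norm_num) (by norm_num)
      (by norm_num) (by linarith) (by norm_num) (by linarith) (by norm_num)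
      (by norm_num) (by ring) (by norm_num) hε0
    have h2 := this.2
    have hval : (1 - ε) * A + ε * B = 0 := by
      have : ε * (A - B) = A := by
        rw [hε]; field_simp
      nlinarith
    nlinarith
  have hA2 : 0 ≤ A := by
    by_contra h
    push_neg at h
    set ε : ℝ := -A / (C - A) with hε
    have hCA : 0 < C - A := by linarith
    have hε0 : 0 < ε := div_pos (by linarith) hCA
    have hε1 : ε < 1 := by rw [hε, div_lt_one hCA]; linarith
    have := key (1 - ε) ε 0 0 0 0 1 0 (by linarith) (by linarith) (by norm_num)
      (by norm_num) (by norm_num) (by norm_num) (by norm_num) (by norm_num)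
      (by ring) (by norm_num) hε0 (by norm_num)
    have h1 := this.1
    have hval : (1 - ε) * A + ε * C = 0 := by
      have : ε * (C - A) = -A := by rw [hε]; field_simp
      nlinarith
    nlinarith
  -- E = 0
  have hE1 : E ≤ 0 := by
    by_contra h
    push_neg at h
    set ε : ℝ := E / (E - B) with hε
    have hEB : 0 < E - B := by linarith
    have hε0 : 0 < ε := div_pos (by linarith) hEB
    have hε1 : ε < 1 := by rw [hε, div_lt_one hEB]; linarith
    have := key 0 1 0 0 0 0 ε (1 - ε) (by norm_num) (by norm_num) (by norm_num)
      (by norm_num) (by norm_num) (by norm_num) (by linarith) (by linarith)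
      (by norm_num) (by ring) (by norm_num) hε0
    have h2 := this.2
    have hval : ε * B + (1 - ε) * E = 0 := by
      have : ε * (E - B) = E := by rw [hε]; field_simp
      nlinarith
    nlinarith
  have hE2 : 0 ≤ E := by
    by_contra h
    push_neg at h
    set ε : ℝ := -E / (C - E) with hε
    have hCE : 0 < C - E := by linarith
    have hε0 : 0 < ε := div_pos (by linarith) hCE
    have hε1 : ε < 1 := by rw [hε, div_lt_one hCE]; linarith
    have := key 0 ε 0 (1 - ε) 0 0 1 0 (by norm_num) (by linarith) (by norm_num)
      (by linarith) (by norm_num) (by norm_num) (by norm_num) (by norm_num)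
      (by ring) (by norm_num) hε0 (by norm_num)
    have h1 := this.1
    have hval : ε * C + (1 - ε) * E = 0 := by
      have : ε * (C - E) = -E := by rw [hε]; field_simp
      nlinarith
    nlinarith
  -- C + B = 0
  have hCB1 : C + B ≤ 0 := by
    by_contra h
    push_neg at h
    set a : ℝ := -B / (C - B) with ha
    have hCB : 0 < C - B := by linarith
    have ha0 : 0 < a := div_pos (by linarith) hCB
    have hahalf : a < 1/2 := by
      rw [ha, div_lt_iff₀ hCB]; linarith
    have ha1 : a < 1 - a := by linarith
    have ha1' : a < 1 := by linarith
    have := key 0 1 0 0 0 a (1 - a) 0 (by norm_num) (by norm_num) (by norm_num)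
      (by norm_num) (by norm_num) (by linarith) (by linarith) (by norm_num)
      (by norm_num) (by ring) (by norm_num) ha1
    have h2 := this.2
    have hval : a * C + (1 - a) * B = 0 := by
      have : a * (C - B) = -B := by rw [ha]; field_simp
      nlinarith
    nlinarith
  have hCB2 : 0 ≤ C + B := by
    by_contra h
    push_neg at h
    set b : ℝ := -B / (C - B) with hb
    have hCB : 0 < C - B := by linarith
    have hb0 : 0 < b := div_pos (by linarith) hCB
    have hbhalf : 1/2 < b := by
      rw [hb, lt_div_iff₀ hCB]; linarith
    have hcb : 1 - b < b := by linarith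
    have hb1 : b < 1 := by
      rw [hb, div_lt_one hCB]; linarith
    have := key 0 b (1 - b) 0 0 0 1 0 (by norm_num) (by linarith) (by linarith)
      (by norm_num) (by norm_num) (by norm_num) (by norm_num) (by norm_num)
      (by ring) (by norm_num) hcb (by norm_num)
    have h1 := this.1
    have hval : b * C + (1 - b) * B = 0 := by
      have : b * (C - B) = -B := by rw [hb]; field_simp
      nlinarith
    nlinarith
  -- Conclusion
  refine ⟨C / 4, by linarith, fun j k => (U true j k + U false j k) / 2, ?_⟩
  intro si sj sk
  have hA : A = 0 := le_antisymm hA1 hA2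
  have hE : E = 0 := le_antisymm hE1 hE2
  have hCB : C + B = 0 := le_antisymm hCB1 hCB2
  cases si <;> cases sj <;> cases sk <;> simp [sgn] <;>
    linarith [hA, hE, hCB]
end

section
/- (Uniqueness of bonus-penalty payment, sufficiency direction) For any λ > 0 and any μ : {-1,1}² → ℝ, the payment U(s_i, s_j, s_k) = λ·(s_i s_j - s_i s_k) + μ(s_j, s_k) is strictly truthful under every uniformly dominant tuple: for every {-1,1}³-valued random vector (S_i, S_j, S_k) in which S_j uniformly dominates S_k for S_i, and every s_i ∈ {-1,1}, s_i uniquely maximizes E[U(ŝ_i, S_j, S_k) | S_i = s_i] over ŝ_i ∈ {-1,1}. -/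
open Finset

/-- Uniqueness of the bonus-penalty payment (sufficiency): for any `λ > 0` and
`μ`, the payment `U(s_i,s_j,s_k) = λ (s_i s_j - s_i s_k) + μ(s_j, s_k)` makes
truth-telling the unique best response for agent `i` under every joint
distribution in which `S_j` uniformly dominates `S_k` for `S_i`. -/
theorem stmt_11 (lam : ℝ) (hlam : 0 < lam) (μ : Bool → Bool → ℝ)
    (p : Bool → Bool → Bool → ℝ)
    (hpos : ∀ s j k, 0 ≤ p s j k)
    (hsum : ∑ s, ∑ j, ∑ k, p s j k = 1)
    (hmarg : ∀ s, 0 < ∑ j, ∑ k, p s j k)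
    (hud1 : (∑ k, p true true k) / (∑ j, ∑ k, p true j k) >
            (∑ j, p true j true) / (∑ j, ∑ k, p true j k))
    (hud2 : (∑ k, p false false k) / (∑ j, ∑ k, p false j k) >
            (∑ j, p false j false) / (∑ j, ∑ k, p false j k)) :
    ∀ si : Bool,
      (∑ j, ∑ k, p si j k *
          (lam * (sgn si * sgn j - sgn si * sgn k) + μ j k)) /
        (∑ j, ∑ k, p si j k) >
      (∑ j, ∑ k, p si j k *
          (lam * (sgn (!si) * sgn j - sgn (!si) * sgn k) + μ j k)) /
        (∑ j, ∑ k, p si j k) := by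
  intro si
  have hd := hmarg si
  rw [gt_iff_lt, div_lt_div_iff_of_pos_right hd]
  have h1 := (div_lt_div_iff_of_pos_right (hmarg true)).mp hud1
  have h2 := (div_lt_div_iff_of_pos_right (hmarg false)).mp hud2
  cases si <;>
    · simp only [Fintype.sum_bool, sgn, Bool.not_true, Bool.not_false] at h1 h2 ⊢
      norm_num at h1 h2 ⊢
      nlinarith [hlam]
end

section
/- Under a Bayesian SST model with the a-priori-similar assumption, the conditional agreement probability between two comparisons sharing a common item satisfies Pr[S(a'',a') = 1 | S(a,a') = 1] = (1/2)·∫ (E[T_θ(a'',a') | θ]·E[T_θ(a,a') | θ] + 1) dP_Θ(θ), for any items a, a', a''. -/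
open MeasureTheory

/-- Under a Bayesian SST model with the a-priori-similar assumption, the
conditional agreement probability between two comparisons sharing a common item
satisfies
`Pr[S(a'',a') = 1 ∣ S(a,a') = 1] = (1/2) ∫ (E[T_θ(a'',a') ∣ θ] E[T_θ(a,a') ∣ θ] + 1) dP_Θ`.
Here `q1 θ = E[T_θ(a'',a') ∣ θ]` and `q2 θ = E[T_θ(a,a') ∣ θ]`; the comparisons
are conditionally independent given `θ`, so
`Pr[S(a'',a')=1 ∧ S(a,a')=1] = ∫ ((1+q1)/2) ((1+q2)/2) dP_Θ` and
`Pr[S(a,a')=1] = ∫ (1+q2)/2 dP_Θ`. -/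
theorem stmt_12 {Θ : Type*} [MeasurableSpace Θ] (μ : Measure Θ)
    [IsProbabilityMeasure μ]
    (q1 q2 : Θ → ℝ)
    (h1 : ∀ θ, q1 θ ∈ Set.Icc (-1 : ℝ) 1)
    (h2 : ∀ θ, q2 θ ∈ Set.Icc (-1 : ℝ) 1)
    (hint1 : Integrable q1 μ) (hint2 : Integrable q2 μ)
    (hint12 : Integrable (fun θ => q1 θ * q2 θ) μ)
    -- a priori similar: the prior mean of each comparison is zero
    (hprior1 : ∫ θ, q1 θ ∂μ = 0) (hprior2 : ∫ θ, q2 θ ∂μ = 0) :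
    (∫ θ, ((1 + q1 θ) / 2) * ((1 + q2 θ) / 2) ∂μ) /
      (∫ θ, (1 + q2 θ) / 2 ∂μ) =
    (1 / 2) * ∫ θ, (q1 θ * q2 θ + 1) ∂μ := by
  have hc : Integrable (fun _ : Θ => (1:ℝ)) μ := integrable_const 1
  have e1 : (∫ θ, (1 + q2 θ) / 2 ∂μ) = 1/2 := by
    have : (fun θ => (1 + q2 θ) / 2) = fun θ => (1:ℝ)/2 + q2 θ / 2 := by
      funext θ; ring
    have hq2' : Integrable (fun θ => q2 θ / 2) μ := hint2.div_const 2
    rw [this, integral_add (integrable_const ((1:ℝ)/2)) hq2']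
    simp [integral_div, hprior2]
  have e2 : (∫ θ, ((1 + q1 θ) / 2) * ((1 + q2 θ) / 2) ∂μ)
      = (1 + ∫ θ, q1 θ * q2 θ ∂μ) / 4 := by
    have : (fun θ => ((1 + q1 θ) / 2) * ((1 + q2 θ) / 2))
        = fun θ => ((1:ℝ) + q1 θ + q2 θ + q1 θ * q2 θ) / 4 := by
      funext θ; ring
    have ha : Integrable (fun θ => (1:ℝ) + q1 θ + q2 θ) μ := (hc.add hint1).add hint2
    have hb : Integrable (fun θ => (1:ℝ) + q1 θ) μ := hc.add hint1
    rw [this, integral_div, integral_add ha hint12,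
      integral_add hb hint2, integral_add hc hint1, hprior1, hprior2]
    simp
  have e3 : (∫ θ, (q1 θ * q2 θ + 1) ∂μ) = (∫ θ, q1 θ * q2 θ ∂μ) + 1 := by
    rw [integral_add hint12 hc]; simp
  rw [e1, e2, e3]; ring
end

section
/- Under any Bayesian SST model, for any three distinct items a, a', a'', the comparison S(a'',a') uniformly dominates S(a'',a) with respect to S(a,a'): Pr[S(a'',a') = 1 | S(a,a') = 1] > Pr[S(a'',a) = 1 | S(a,a') = 1], and Pr[S(a'',a') = -1 | S(a,a') = -1] > Pr[S(a'',a) = -1 | S(a,a') = -1]. -/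
open MeasureTheory

lemma stmt13_expand_plus {Θ : Type*} [MeasurableSpace Θ] (μ : Measure Θ)
    [IsProbabilityMeasure μ] (f g : Θ → ℝ)
    (hf : Integrable f μ) (hg : Integrable g μ)
    (hfg : Integrable (fun θ => f θ * g θ) μ) :
    ∫ θ, ((1 + f θ) / 2) * ((1 + g θ) / 2) ∂μ =
      (1 + (∫ θ, f θ ∂μ) + (∫ θ, g θ ∂μ) + ∫ θ, f θ * g θ ∂μ) / 4 := by
  have h : ∀ θ, ((1 + f θ) / 2) * ((1 + g θ) / 2)
      = (1 + f θ + g θ + f θ * g θ) / 4 := fun θ => by ring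
  simp only [h]
  rw [integral_div]
  congr 1
  have h0 : Integrable (fun _ : Θ => (1 : ℝ)) μ := integrable_const 1
  have h1 : Integrable (fun a => 1 + f a) μ := h0.add hf
  have h2 : Integrable (fun a => 1 + f a + g a) μ := h1.add hg
  rw [integral_add h2 hfg, integral_add h1 hg, integral_add h0 hf]
  simp

lemma stmt13_expand_minus {Θ : Type*} [MeasurableSpace Θ] (μ : Measure Θ)
    [IsProbabilityMeasure μ] (f g : Θ → ℝ)
    (hf : Integrable f μ) (hg : Integrable g μ)
    (hfg : Integrable (fun θ => f θ * g θ) μ) :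
    ∫ θ, ((1 - f θ) / 2) * ((1 - g θ) / 2) ∂μ =
      (1 - (∫ θ, f θ ∂μ) - (∫ θ, g θ ∂μ) + ∫ θ, f θ * g θ ∂μ) / 4 := by
  have := stmt13_expand_plus μ (fun θ => -f θ) (fun θ => -g θ) hf.neg hg.neg
    (by simpa using hfg)
  rw [integral_neg, integral_neg] at this
  simp only [sub_eq_add_neg]
  simpa using this

/-- Under any Bayesian SST model, for distinct items `a, a', a''`, the comparison
`S(a'',a')` uniformly dominates `S(a'',a)` for `S(a,a')`.  Here
`Q θ α α' = E[T_θ(α,α') ∣ θ] ∈ [-1,1] \ {0}` is antisymmetric and satisfies strong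
stochastic transitivity for each `θ`; comparisons are conditionally independent
given `θ`, so e.g.
`Pr[S(a'',a') = 1 ∣ S(a,a') = 1] = (∫ ((1+Q θ a'' a')/2)((1+Q θ a a')/2) dP_Θ) / (∫ (1+Q θ a a')/2 dP_Θ)`;
a-priori similarity means `∫ Q θ α α' dP_Θ = 0`. -/
theorem stmt_13 {Θ A : Type*} [MeasurableSpace Θ] (μ : Measure Θ)
    [IsProbabilityMeasure μ]
    (Q : Θ → A → A → ℝ)
    (hrange : ∀ θ α α', Q θ α α' ∈ Set.Icc (-1 : ℝ) 1)
    (hne0 : ∀ θ α α', α ≠ α' → Q θ α α' ≠ 0)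
    (hanti : ∀ θ α α', Q θ α α' = -Q θ α' α)
    (hSST : ∀ θ (b b' b'' : A), 0 < Q θ b b' → 0 < Q θ b' b'' →
      Q θ b b'' > max (Q θ b b') (Q θ b' b''))
    (hint : ∀ α α', Integrable (fun θ => Q θ α α') μ)
    (hint2 : ∀ α α' β β', Integrable (fun θ => Q θ α α' * Q θ β β') μ)
    (hprior : ∀ α α', ∫ θ, Q θ α α' ∂μ = 0)
    (a a' a'' : A) (hd1 : a ≠ a') (hd2 : a' ≠ a'') (hd3 : a ≠ a'') :
    ((∫ θ, ((1 + Q θ a'' a') / 2) * ((1 + Q θ a a') / 2) ∂μ) /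
        (∫ θ, (1 + Q θ a a') / 2 ∂μ) >
      (∫ θ, ((1 + Q θ a'' a) / 2) * ((1 + Q θ a a') / 2) ∂μ) /
        (∫ θ, (1 + Q θ a a') / 2 ∂μ)) ∧
    ((∫ θ, ((1 - Q θ a'' a') / 2) * ((1 - Q θ a a') / 2) ∂μ) /
        (∫ θ, (1 - Q θ a a') / 2 ∂μ) >
      (∫ θ, ((1 - Q θ a'' a) / 2) * ((1 - Q θ a a') / 2) ∂μ) /
        (∫ θ, (1 - Q θ a a') / 2 ∂μ)) := by
  -- pointwise strict inequality from SST + antisymmetry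
  have key : ∀ θ, Q θ a'' a * Q θ a a' < Q θ a'' a' * Q θ a a' := by
    intro θ
    have hA := hanti θ a a'
    have hB := hanti θ a a''
    have hC := hanti θ a' a''
    rcases (hne0 θ a a' hd1).lt_or_gt with hx | hx
    · have hxa : 0 < Q θ a' a := by linarith
      have hv : Q θ a'' a' < Q θ a'' a := by
        rcases (hne0 θ a'' a' hd2.symm).lt_or_gt with hv | hv
        · rcases (hne0 θ a'' a hd3.symm).lt_or_gt with hu | hu
          · have hu' : 0 < Q θ a a'' := by linarith
            have h := hSST θ a' a a'' hxa hu'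
            have h2 := le_max_right (Q θ a' a) (Q θ a a'')
            linarith
          · linarith
        · have h := hSST θ a'' a' a hv hxa
          have h2 := le_max_left (Q θ a'' a') (Q θ a' a)
          linarith
      exact mul_lt_mul_of_neg_right hv hx
    · have hu : Q θ a'' a < Q θ a'' a' := by
        rcases (hne0 θ a'' a hd3.symm).lt_or_gt with hu | hu
        · rcases (hne0 θ a'' a' hd2.symm).lt_or_gt with hv | hv
          · have hv' : 0 < Q θ a' a'' := by linarith
            have h := hSST θ a a' a'' hx hv'
            have h2 := le_max_right (Q θ a a') (Q θ a' a'')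
            linarith
          · linarith
        · have h := hSST θ a'' a a' hu hx
          have h2 := le_max_left (Q θ a'' a) (Q θ a a')
          linarith
      exact mul_lt_mul_of_pos_right hu hx
  -- strict inequality of the correlation integrals
  have hIlt : ∫ θ, Q θ a'' a * Q θ a a' ∂μ < ∫ θ, Q θ a'' a' * Q θ a a' ∂μ := by
    have hdiff : Integrable (fun θ => Q θ a'' a' * Q θ a a' - Q θ a'' a * Q θ a a') μ :=
      (hint2 a'' a' a a').sub (hint2 a'' a a a')
    have hpos : 0 < ∫ θ, (Q θ a'' a' * Q θ a a' - Q θ a'' a * Q θ a a') ∂μ := by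
      rw [integral_pos_iff_support_of_nonneg
        (fun θ => by have := key θ; dsimp; linarith) hdiff]
      have hsup : Function.support
          (fun θ => Q θ a'' a' * Q θ a a' - Q θ a'' a * Q θ a a') = Set.univ := by
        ext θ; simp only [Function.mem_support, Set.mem_univ, iff_true]
        have := key θ; intro h; linarith
      rw [hsup]
      simp [measure_univ]
    rw [integral_sub (hint2 a'' a' a a') (hint2 a'' a a a')] at hpos
    linarith
  -- denominators are 1/2
  have hden : ∫ θ, (1 + Q θ a a') / 2 ∂μ = 1 / 2 := by
    rw [integral_div, integral_add (integrable_const 1) (hint a a'), hprior]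
    simp
  have hden' : ∫ θ, (1 - Q θ a a') / 2 ∂μ = 1 / 2 := by
    rw [integral_div, integral_sub (integrable_const 1) (hint a a'), hprior]
    simp
  -- expand numerators
  have e1 : ∫ θ, ((1 + Q θ a'' a') / 2) * ((1 + Q θ a a') / 2) ∂μ
      = (1 + ∫ θ, Q θ a'' a' * Q θ a a' ∂μ) / 4 := by
    simpa [hprior] using stmt13_expand_plus μ (fun θ => Q θ a'' a') (fun θ => Q θ a a')
      (hint a'' a') (hint a a') (hint2 a'' a' a a')
  have e2 : ∫ θ, ((1 + Q θ a'' a) / 2) * ((1 + Q θ a a') / 2) ∂μ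
      = (1 + ∫ θ, Q θ a'' a * Q θ a a' ∂μ) / 4 := by
    simpa [hprior] using stmt13_expand_plus μ (fun θ => Q θ a'' a) (fun θ => Q θ a a')
      (hint a'' a) (hint a a') (hint2 a'' a a a')
  have e3 : ∫ θ, ((1 - Q θ a'' a') / 2) * ((1 - Q θ a a') / 2) ∂μ
      = (1 + ∫ θ, Q θ a'' a' * Q θ a a' ∂μ) / 4 := by
    simpa [hprior] using stmt13_expand_minus μ (fun θ => Q θ a'' a') (fun θ => Q θ a a')
      (hint a'' a') (hint a a') (hint2 a'' a' a a')
  have e4 : ∫ θ, ((1 - Q θ a'' a) / 2) * ((1 - Q θ a a') / 2) ∂μ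
      = (1 + ∫ θ, Q θ a'' a * Q θ a a' ∂μ) / 4 := by
    simpa [hprior] using stmt13_expand_minus μ (fun θ => Q θ a'' a) (fun θ => Q θ a a')
      (hint a'' a) (hint a a') (hint2 a'' a a a')
  refine ⟨?_, ?_⟩
  · rw [hden, e1, e2]; rw [gt_iff_lt, div_lt_div_iff_of_pos_right (by norm_num)]
    linarith
  · rw [hden', e3, e4]; rw [gt_iff_lt, div_lt_div_iff_of_pos_right (by norm_num)]
    linarith
end

section
/- Let (S_i, S_j, S_k) take values in a finite set Ω³ and suppose S_j uniformly dominates S_k for S_i in the generalized sense: for all s ≠ s' in Ω, Pr[S_j = s | S_i = s] - Pr[S_k = s | S_i = s] > 0 and Pr[S_j = s' | S_i = s] - Pr[S_k = s' | S_i = s] < 0. Then summing these inequalities over s' yields Pr[S_j = s | S_i = s] - Pr[S_k = s | S_i = s] > 0 for every s, and hence E[2(𝟙[S_i = S_j] - 𝟙[S_i = S_k])] > 0; moreover truthful reporting is the unique best response: for each s, s = argmax over ŝ of Pr[S_j = ŝ | S_i = s] - Pr[S_k = ŝ | S_i = s]. -/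
open Finset

/-- Generalized uniform dominance on a finite signal domain `Ω` implies that the
diagonal conditional-probability gap is positive for every signal, that the
expected generalized bonus-penalty payment `2(𝟙[S_i = S_j] - 𝟙[S_i = S_k])`
under truth-telling is strictly positive, and that truthful reporting is the
unique best response. -/
theorem stmt_18 {Ω : Type*} [Fintype Ω] [DecidableEq Ω] [Nontrivial Ω]
    (p : Ω → Ω → Ω → ℝ)
    (hpos : ∀ s j k, 0 ≤ p s j k)
    (hsum : ∑ s, ∑ j, ∑ k, p s j k = 1)
    (hmarg : ∀ s, 0 < ∑ j, ∑ k, p s j k)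
    -- generalized uniform dominance
    (hud : ∀ s s' : Ω, s ≠ s' →
      ((∑ k, p s s k) / (∑ j, ∑ k, p s j k) -
        (∑ j, p s j s) / (∑ j, ∑ k, p s j k) > 0) ∧
      ((∑ k, p s s' k) / (∑ j, ∑ k, p s j k) -
        (∑ j, p s j s') / (∑ j, ∑ k, p s j k) < 0)) :
    (∀ s : Ω, (∑ k, p s s k) / (∑ j, ∑ k, p s j k) -
        (∑ j, p s j s) / (∑ j, ∑ k, p s j k) > 0) ∧
    (∑ s, ∑ j, ∑ k, p s j k *
        (2 * ((if s = j then (1 : ℝ) else 0) - (if s = k then (1 : ℝ) else 0)))) > 0 ∧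
    (∀ s shat : Ω, shat ≠ s →
      (∑ k, p s s k) / (∑ j, ∑ k, p s j k) -
        (∑ j, p s j s) / (∑ j, ∑ k, p s j k) >
      (∑ k, p s shat k) / (∑ j, ∑ k, p s j k) -
        (∑ j, p s j shat) / (∑ j, ∑ k, p s j k)) := by
  have hdiag : ∀ s : Ω, (∑ k, p s s k) / (∑ j, ∑ k, p s j k) -
      (∑ j, p s j s) / (∑ j, ∑ k, p s j k) > 0 := by
    intro s
    obtain ⟨s', hs'⟩ := exists_ne s
    exact (hud s s' (Ne.symm hs')).1
  refine ⟨hdiag, ?_, ?_⟩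
  · have key : ∀ s : Ω, 0 < (∑ k, p s s k) - (∑ j, p s j s) := by
      intro s
      have h := hdiag s
      rw [div_sub_div_same] at h
      exact (div_pos_iff_of_pos_right (hmarg s)).mp h
    have heq : ∀ s : Ω, (∑ j, ∑ k, p s j k *
        (2 * ((if s = j then (1 : ℝ) else 0) - (if s = k then (1 : ℝ) else 0))))
        = 2 * ((∑ k, p s s k) - (∑ j, p s j s)) := by
      intro s
      have h1 : ∀ j k, p s j k * (2 * ((if s = j then (1:ℝ) else 0) - (if s = k then 1 else 0)))
          = (if s = j then (1:ℝ) else 0) * (2 * p s j k)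
            - (if s = k then (1:ℝ) else 0) * (2 * p s j k) := by
        intro j k; ring
      simp only [h1, Finset.sum_sub_distrib, ← Finset.mul_sum, ite_mul, one_mul, zero_mul,
        Finset.sum_ite_eq, Finset.mem_univ, if_true]
      have h2 : ∀ x : Ω, (∑ x1 : Ω, if s = x then 2 * p s x x1 else 0)
          = if s = x then ∑ x1 : Ω, 2 * p s x x1 else 0 := fun x => by
        split_ifs <;> simp
      rw [Finset.sum_congr rfl (fun x _ => h2 x), Finset.sum_ite_eq]
      simp only [Finset.mem_univ, if_true]
      rw [← Finset.mul_sum]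
      ring
    rw [Finset.sum_congr rfl (fun s _ => heq s)]
    have : (0:ℝ) < ∑ s : Ω, 2 * ((∑ k, p s s k) - (∑ j, p s j s)) := by
      apply Finset.sum_pos (fun s _ => by linarith [key s]) Finset.univ_nonempty
    exact this
  · intro s shat hne
    obtain ⟨h1, h2⟩ := hud s shat (Ne.symm hne)
    linarith
end

section
/- Let Ω be a finite set, let σ : Ω × Ω → [0,1] be a stochastic strategy matrix (rows sum to 1), and define f_{s}(t) = Σ_{ŝ∈Ω} σ(s, ŝ) σ(t, ŝ). Then 0 ≤ f_s(t) ≤ 1 for all s, t ∈ Ω, with f_s(s) ≤ 1; consequently, if S_j uniformly dominates S_k for S_i (generalized sense), then when agents j and k both use strategy σ, the expected generalized bonus-penalty payment to a truthfully-reporting agent i is at most the expected payment under full truth-telling: Σ_s Pr[S_i = s] Σ_t (Pr[S_j = t|S_i = s] - Pr[S_k = t|S_i = s]) f_s(t) ≤ Σ_s Pr[S_i = s](Pr[S_j = s|S_i = s] - Pr[S_k = s|S_i = s]). -/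
open Finset

/-- For a stochastic strategy matrix `σ` on a finite domain `Ω`, the overlap
`f_s(t) = ∑_{ŝ} σ(s,ŝ) σ(t,ŝ)` lies in `[0,1]`; consequently, under generalized
uniform dominance, when agents `j` and `k` both use strategy `σ`, the expected
generalized bonus-penalty payment is at most the expected payment under full
truth-telling. -/
theorem stmt_19 {Ω : Type*} [Fintype Ω] [DecidableEq Ω]
    (σ : Ω → Ω → ℝ)
    (hσpos : ∀ s t, 0 ≤ σ s t) (hσsum : ∀ s, ∑ t, σ s t = 1)
    (p : Ω → Ω → Ω → ℝ)
    (hpos : ∀ s j k, 0 ≤ p s j k)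
    (hsum : ∑ s, ∑ j, ∑ k, p s j k = 1)
    (hmarg : ∀ s, 0 < ∑ j, ∑ k, p s j k)
    (hud : ∀ s s' : Ω, s ≠ s' →
      ((∑ k, p s s k) / (∑ j, ∑ k, p s j k) -
        (∑ j, p s j s) / (∑ j, ∑ k, p s j k) > 0) ∧
      ((∑ k, p s s' k) / (∑ j, ∑ k, p s j k) -
        (∑ j, p s j s') / (∑ j, ∑ k, p s j k) < 0)) :
    (∀ s t : Ω, 0 ≤ ∑ shat, σ s shat * σ t shat ∧
      (∑ shat, σ s shat * σ t shat) ≤ 1) ∧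
    (∑ s, (∑ j, ∑ k, p s j k) *
        ∑ t, ((∑ k, p s t k) / (∑ j, ∑ k, p s j k) -
              (∑ j, p s j t) / (∑ j, ∑ k, p s j k)) *
          (∑ shat, σ s shat * σ t shat)) ≤
    (∑ s, (∑ j, ∑ k, p s j k) *
        ((∑ k, p s s k) / (∑ j, ∑ k, p s j k) -
         (∑ j, p s j s) / (∑ j, ∑ k, p s j k))) := by
  have hf : ∀ s t : Ω, 0 ≤ ∑ shat, σ s shat * σ t shat ∧
      (∑ shat, σ s shat * σ t shat) ≤ 1 := by
    intro s t
    constructor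
    · exact Finset.sum_nonneg fun i _ => mul_nonneg (hσpos s i) (hσpos t i)
    · calc (∑ shat, σ s shat * σ t shat) ≤ ∑ shat, σ s shat := by
            apply Finset.sum_le_sum
            intro i _
            have h1 : σ t i ≤ 1 := by
              have := Finset.single_le_sum (f := σ t) (fun j _ => hσpos t j)
                (Finset.mem_univ i)
              rw [hσsum t] at this; exact this
            nlinarith [hσpos s i]
      _ = 1 := hσsum s
  refine ⟨hf, ?_⟩
  apply Finset.sum_le_sum
  intro s _
  set M := ∑ j, ∑ k, p s j k with hM
  have hMpos := hmarg s
  have hdzero : ∑ t, ((∑ k, p s t k) / M - (∑ j, p s j t) / M) = 0 := by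
    rw [Finset.sum_sub_distrib, ← Finset.sum_div, ← Finset.sum_div]
    rw [Finset.sum_comm (f := fun j t => p s j t)]
    ring
  have hds : 0 ≤ (∑ k, p s s k) / M - (∑ j, p s j s) / M := by
    have hsplit := Finset.add_sum_erase Finset.univ
      (fun t => (∑ k, p s t k) / M - (∑ j, p s j t) / M) (Finset.mem_univ s)
    have hneg : ∑ t ∈ Finset.univ.erase s,
        ((∑ k, p s t k) / M - (∑ j, p s j t) / M) ≤ 0 := by
      apply Finset.sum_nonpos
      intro t ht
      have hts : s ≠ t := fun h => (Finset.mem_erase.mp ht).1 h.symm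
      exact le_of_lt (hud s t hts).2
    have : (∑ k, p s s k) / M - (∑ j, p s j s) / M
        + ∑ t ∈ Finset.univ.erase s,
          ((∑ k, p s t k) / M - (∑ j, p s j t) / M) = 0 := by
      rw [hsplit]; exact hdzero
    linarith
  gcongr
  have hsplit := Finset.add_sum_erase Finset.univ
    (fun t => ((∑ k, p s t k) / M - (∑ j, p s j t) / M) *
      (∑ shat, σ s shat * σ t shat)) (Finset.mem_univ s)
  rw [← hsplit]
  have h1 : ((∑ k, p s s k) / M - (∑ j, p s j s) / M) *
      (∑ shat, σ s shat * σ s shat) ≤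
      ((∑ k, p s s k) / M - (∑ j, p s j s) / M) := by
    nlinarith [(hf s s).1, (hf s s).2]
  have h2 : ∑ t ∈ Finset.univ.erase s,
      (((∑ k, p s t k) / M - (∑ j, p s j t) / M) *
        (∑ shat, σ s shat * σ t shat)) ≤ 0 := by
    apply Finset.sum_nonpos
    intro t ht
    have hts : s ≠ t := fun h => (Finset.mem_erase.mp ht).1 h.symm
    exact mul_nonpos_of_nonpos_of_nonneg (le_of_lt (hud s t hts).2) (hf s t).1
  linarith
end
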